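/- arXiv:1007.0711 — 2 statements merged into one kernel-verified Lean document; each statement's English description precedes it below -/
import Mathlib

section
/- Let n ≥ 1 and let v be a signed capacity on [n]. Then the signed Choquet integral C_v : ℝ^n → ℝ is comonotonically additive: C_v(x + x') = C_v(x) + C_v(x') for all comonotonic vectors x, x' ∈ ℝ^n. -/
open Finset

/-- The Choquet-type sum computed with a given permutation `π`:
`∑ i (v({π(i),…,π(n)}) − v({π(i+1),…,π(n)})) x_{π(i)}`. -/
noncomputable def choquetSum {n : ℕ} (v : Finset (Fin n) → ℝ) (π : Equiv.Perm (Fin n))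
    (x : Fin n → ℝ) : ℝ :=
  ∑ i : Fin n,
    (v ((Finset.univ.filter fun k => i ≤ k).image π) -
      v ((Finset.univ.filter fun k => i < k).image π)) * x (π i)

/-- The signed (discrete) Choquet integral of `x` w.r.t. the set function `v`,
computed with a sorting permutation of `x`. -/
noncomputable def signedChoquet {n : ℕ} (v : Finset (Fin n) → ℝ) (x : Fin n → ℝ) : ℝ :=
  choquetSum v (Tuple.sort x) x

/-- Two vectors are comonotonic. -/
def Comonotone' {n : ℕ} (x x' : Fin n → ℝ) : Prop :=
  ∀ i j, 0 ≤ (x i - x j) * (x' i - x' j)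

/-- Characteristic (indicator) vector of `S`. -/
def indVec {n : ℕ} (S : Finset (Fin n)) : Fin n → ℝ := fun i => if i ∈ S then 1 else 0

/-- The unanimity game `v_S`. -/
def unanimity {n : ℕ} (S T : Finset (Fin n)) : ℝ := if S ⊆ T then 1 else 0

/-- The Möbius transform of a set function. -/
noncomputable def mobius {n : ℕ} (v : Finset (Fin n) → ℝ) (S : Finset (Fin n)) : ℝ :=
  ∑ T ∈ S.powerset, (-1 : ℝ) ^ (S.card - T.card) * v T


/-! For a fixed permutation the Choquet sum is linear in `x`, and a permutation sorting `x + x'`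
also sorts `x` and `x'` when they are comonotonic. It remains to see that the sum is the same for
all permutations sorting `x`: after Abel summation every nonzero increment of the sorted values is
weighted by `v` of an upper level set `{k | t ≤ x k}`, which only depends on `x`. -/

/-- `{π j, π (j+1), …, π (n-1)}`, which is empty for `j ≥ n`. -/
def permTail {n : ℕ} (π : Equiv.Perm (Fin n)) (j : ℕ) : Finset (Fin n) :=
  univ.filter fun k => j ≤ (π.symm k : ℕ)

section permTail

variable {n : ℕ} (π : Equiv.Perm (Fin n))

lemma permTail_zero : permTail π 0 = univ := by
  simp [permTail]

lemma permTail_of_le {j : ℕ} (hj : n ≤ j) : permTail π j = ∅ :=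
  filter_false_of_mem fun k _ => by have := (π.symm k).isLt; omega

lemma image_filter_le_eq_permTail (i : Fin n) :
    (univ.filter fun k => i ≤ k).image π = permTail π i := by
  ext k
  simp only [permTail, mem_image, mem_filter, mem_univ, true_and]
  exact ⟨by rintro ⟨l, hl, rfl⟩; simpa using hl,
    fun hk => ⟨π.symm k, Fin.le_def.2 hk, π.apply_symm_apply k⟩⟩

lemma image_filter_lt_eq_permTail (i : Fin n) :
    (univ.filter fun k => i < k).image π = permTail π (i + 1) := by
  ext k
  simp only [permTail, mem_image, mem_filter, mem_univ, true_and]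
  exact ⟨by rintro ⟨l, hl, rfl⟩; simpa using hl,
    fun hk => ⟨π.symm k, Fin.lt_def.2 hk, π.apply_symm_apply k⟩⟩

lemma permTail_eq_filter_of_lt {x : Fin n → ℝ} (hπ : Monotone (x ∘ π)) {i j : Fin n}
    (hij : x (π i) < x (π j)) (hji : (j : ℕ) ≤ i + 1) :
    permTail π j = univ.filter fun k => x (π j) ≤ x k := by
  ext k
  simp only [permTail, mem_filter, mem_univ, true_and]
  constructor
  · intro hk
    simpa using hπ (show j ≤ π.symm k from Fin.le_def.2 hk)
  · intro hk
    by_contra! hlt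
    have hle : x k ≤ x (π i) := by
      simpa using hπ (show π.symm k ≤ i from Fin.le_def.2 (by omega))
    linarith

end permTail

section choquetSum

variable {n : ℕ} (v : Finset (Fin n) → ℝ) (π : Equiv.Perm (Fin n)) (x : Fin n → ℝ)

lemma choquetSum_add (x' : Fin n → ℝ) :
    choquetSum v π (x + x') = choquetSum v π x + choquetSum v π x' := by
  simp only [choquetSum, Pi.add_apply, mul_add, sum_add_distrib]

variable {x} {y : ℕ → ℝ}

lemma choquetSum_eq_sum_range (hy : ∀ i : Fin n, y i = x (π i)) :
    choquetSum v π x = ∑ j ∈ range n, (v (permTail π j) - v (permTail π (j + 1))) * y j := by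
  rw [choquetSum, ← Fin.sum_univ_eq_sum_range]
  refine sum_congr rfl fun i _ => ?_
  rw [image_filter_le_eq_permTail, image_filter_lt_eq_permTail, hy]

lemma choquetSum_eq_by_parts (hy : ∀ i : Fin n, y i = x (π i)) :
    choquetSum v π x = y (n - 1) * (v univ - v ∅) -
      ∑ j ∈ range (n - 1), (y (j + 1) - y j) * (v univ - v (permTail π (j + 1))) := by
  have htel : ∀ m, ∑ j ∈ range m, (v (permTail π j) - v (permTail π (j + 1))) =
      v univ - v (permTail π m) := fun m => by
    rw [sum_range_sub', permTail_zero]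
  have hparts := sum_range_by_parts y (fun j => v (permTail π j) - v (permTail π (j + 1))) n
  simp only [smul_eq_mul, htel, permTail_of_le π le_rfl] at hparts
  rw [choquetSum_eq_sum_range v π hy, ← hparts]
  exact sum_congr rfl fun j _ => mul_comm _ _

end choquetSum

lemma signedChoquet_eq_choquetSum {n : ℕ} (v : Finset (Fin n) → ℝ) {π : Equiv.Perm (Fin n)}
    {x : Fin n → ℝ} (hπ : Monotone (x ∘ π)) : signedChoquet v x = choquetSum v π x := by
  set σ := Tuple.sort x
  have hσ : Monotone (x ∘ σ) := Tuple.monotone_sort x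
  have hπσ : ∀ i, x (π i) = x (σ i) := congrFun (Tuple.comp_sort_eq_comp_iff_monotone.2 hπ)
  set y : ℕ → ℝ := Function.extend Fin.val (x ∘ σ) 0
  have hyσ : ∀ i : Fin n, y i = x (σ i) := fun i => Fin.val_injective.extend_apply _ _ i
  have hyπ : ∀ i : Fin n, y i = x (π i) := fun i => (hyσ i).trans (hπσ i).symm
  rw [signedChoquet, choquetSum_eq_by_parts v σ hyσ, choquetSum_eq_by_parts v π hyπ]
  refine congrArg _ (sum_congr rfl fun j hj => ?_)
  have hj : j + 1 < n := by rw [mem_range] at hj; omega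
  set i₀ : Fin n := ⟨j, by omega⟩
  set i₁ : Fin n := ⟨j + 1, hj⟩
  rw [show y j = x (σ i₀) from hyσ i₀, show y (j + 1) = x (σ i₁) from hyσ i₁]
  rcases (hσ (Fin.mk_le_mk.2 (Nat.le_succ j) : i₀ ≤ i₁)).eq_or_lt with heq | hlt
  · rw [show x (σ i₀) = x (σ i₁) from heq, sub_self, zero_mul, zero_mul]
  · have hlt' : x (π i₀) < x (π i₁) := by rwa [hπσ, hπσ]
    rw [permTail_eq_filter_of_lt σ hσ hlt le_rfl, permTail_eq_filter_of_lt π hπ hlt' le_rfl,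
      hπσ]

lemma Comonotone'.monotone_left {n : ℕ} {x x' : Fin n → ℝ} (h : Comonotone' x x')
    {α : Type*} [Preorder α] {f : α → Fin n} (hf : Monotone ((x + x') ∘ f)) :
    Monotone (x ∘ f) := by
  intro a b hab
  have hsum : x (f a) + x' (f a) ≤ x (f b) + x' (f b) := hf hab
  have hprod := h (f a) (f b)
  simp only [Function.comp_apply]
  by_contra! hlt
  nlinarith

lemma Comonotone'.symm {n : ℕ} {x x' : Fin n → ℝ} (h : Comonotone' x x') : Comonotone' x' x :=
  fun i j => mul_comm (x i - x j) _ ▸ h i j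

theorem signedChoquet_comonotone_additive_general {n : ℕ}
    (v : Finset (Fin n) → ℝ) :
    ∀ x x' : Fin n → ℝ, Comonotone' x x' →
      signedChoquet v (x + x') = signedChoquet v x + signedChoquet v x' := by
  intro x x' h
  have hπ : Monotone ((x + x') ∘ Tuple.sort (x + x')) := Tuple.monotone_sort _
  have hπ' : Monotone ((x' + x) ∘ Tuple.sort (x + x')) := by rwa [add_comm x' x]
  rw [signedChoquet, choquetSum_add, signedChoquet_eq_choquetSum v (h.monotone_left hπ),
    signedChoquet_eq_choquetSum v (h.symm.monotone_left hπ')]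

/-- The signed Choquet integral is comonotonically additive. -/
theorem signedChoquet_comonotone_additive {n : ℕ} (hn : 1 ≤ n)
    (v : Finset (Fin n) → ℝ) (hv : v ∅ = 0) :
    ∀ x x' : Fin n → ℝ, Comonotone' x x' →
      signedChoquet v (x + x') = signedChoquet v x + signedChoquet v x' :=
  signedChoquet_comonotone_additive_general v
end

section
/- Let n ≥ 2 and, for each signed capacity v on [n], define f_v : ℝ^n → ℝ by f_v(x) = Σ_{∅ ≠ T ⊆ [n]} m_v(T)·Π_{i ∈ T} x_i (the multilinear extension), where m_v is the Möbius transform of v. Then this family satisfies condition (i) (there exist functions g_T : ℝ^n → ℝ, T ⊆ [n], with f_v = Σ_{T ⊆ [n]} v(T)·g_T for all v) and condition (ii) (for every S ⊆ [n], f_{v_S}(x) = 0 whenever x_i = 0 for some i ∈ S), but it fails condition (iii): there exist S ⊆ [n], r > 0, s ∈ ℝ, and x ∈ ℝ^n with f_{v_S}(r x + s·1_{[n]}) ≠ r·f_{v_S}(x) + s. -/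
open Finset

/-- The family of multilinear polynomial functions:
`f_v(x) = ∑_{∅ ≠ T ⊆ [n]} m_v(T) ∏_{i ∈ T} x_i`. -/
noncomputable def multilinearFamily {n : ℕ} (v : Finset (Fin n) → ℝ) (x : Fin n → ℝ) : ℝ :=
  ∑ T ∈ Finset.univ.powerset.filter (fun T : Finset (Fin n) => T.Nonempty),
    mobius v T * ∏ i ∈ T, x i

lemma mobius_unanimity {n : ℕ} (S T : Finset (Fin n)) :
    mobius (unanimity S) T = if T = S then 1 else 0 := by
  unfold mobius unanimity
  simp only [mul_ite, mul_one, mul_zero]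
  rw [← Finset.sum_filter]
  by_cases hST : S ⊆ T
  · have key : T.powerset.filter (fun U => S ⊆ U) = (T \ S).powerset.image (fun W => W ∪ S) := by
      ext U
      simp only [mem_filter, mem_powerset, mem_image]
      constructor
      · rintro ⟨h1, h2⟩
        exact ⟨U \ S, sdiff_subset_sdiff h1 le_rfl, by rw [sdiff_union_of_subset h2]⟩
      · rintro ⟨W, hW, rfl⟩
        exact ⟨union_subset ((subset_sdiff.mp hW).1) hST, subset_union_right⟩
    have hinj : ∀ a ∈ (T \ S).powerset, ∀ b ∈ (T \ S).powerset,
        a ∪ S = b ∪ S → a = b := by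
      intro a ha b hb hab
      simp only [mem_powerset, subset_sdiff] at ha hb
      have h : ∀ W : Finset (Fin n), Disjoint W S → (W ∪ S) \ S = W := by
        intro W h; rw [union_sdiff_right, sdiff_eq_self_of_disjoint h]
      rw [← h a ha.2, hab, h b hb.2]
    rw [key, Finset.sum_image hinj]
    have hcard : ∀ W ∈ (T \ S).powerset, T.card - (W ∪ S).card = (T \ S).card - W.card := by
      intro W hW
      simp only [mem_powerset, subset_sdiff] at hW
      have hle : W.card ≤ (T \ S).card := card_le_card (subset_sdiff.mpr hW)
      rw [card_union_of_disjoint hW.2, card_sdiff_of_subset hST]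
      have hS2 : S.card ≤ T.card := card_le_card hST
      omega
    rw [Finset.sum_congr rfl (fun W hW => by rw [hcard W hW])]
    by_cases hTS : T = S
    · subst hTS; simp
    · have hne : (T \ S).Nonempty := by
        rw [sdiff_nonempty]; intro h; exact hTS (Subset.antisymm hST h).symm
      rw [if_neg hTS]
      have h0 : (∑ W ∈ (T \ S).powerset, (-1 : ℝ) ^ W.card) = 0 := by
        exact_mod_cast Finset.sum_powerset_neg_one_pow_card_of_nonempty hne
      calc ∑ W ∈ (T \ S).powerset, (-1 : ℝ) ^ ((T \ S).card - W.card)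
          = (-1 : ℝ) ^ (T \ S).card * ∑ W ∈ (T \ S).powerset, (-1 : ℝ) ^ W.card := by
            rw [Finset.mul_sum]
            refine Finset.sum_congr rfl fun W hW => ?_
            rw [mem_powerset] at hW
            have hle := card_le_card hW
            rw [← pow_add]
            have h2 : (T \ S).card + W.card = ((T \ S).card - W.card) + 2 * W.card := by omega
            rw [h2, pow_add, pow_mul]
            norm_num
        _ = 0 := by rw [h0, mul_zero]
  · rw [if_neg (fun h => hST (le_of_eq h.symm)), Finset.sum_eq_zero]
    intro U hU
    exfalso
    simp only [mem_filter, mem_powerset] at hU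
    exact hST (hU.2.trans hU.1)

lemma multilinear_unanimity {n : ℕ} (S : Finset (Fin n)) (hS : S.Nonempty) (x : Fin n → ℝ) :
    multilinearFamily (unanimity S) x = ∏ i ∈ S, x i := by
  unfold multilinearFamily
  simp only [mobius_unanimity]
  rw [Finset.sum_eq_single S]
  · simp
  · intro T _ hTS; rw [if_neg hTS, zero_mul]
  · intro h; exact absurd (by simp [hS]) h

/-- the multilinear family satisfies conditions (i) and (ii) of
the axiomatization but fails condition (iii). -/
theorem multilinearFamily_i_ii_not_iii {n : ℕ} (hn : 2 ≤ n) :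
    (∃ g : Finset (Fin n) → (Fin n → ℝ) → ℝ,
        ∀ v : Finset (Fin n) → ℝ, v ∅ = 0 → ∀ x : Fin n → ℝ,
          multilinearFamily v x = ∑ T : Finset (Fin n), v T * g T x) ∧
    (∀ S : Finset (Fin n), S.Nonempty → ∀ x : Fin n → ℝ,
        (∃ i ∈ S, x i = 0) → multilinearFamily (unanimity S) x = 0) ∧
    (∃ S : Finset (Fin n), ∃ r : ℝ, 0 < r ∧ ∃ s : ℝ, ∃ x : Fin n → ℝ,
        S.Nonempty ∧
        multilinearFamily (unanimity S) (fun i => r * x i + s) ≠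
          r * multilinearFamily (unanimity S) x + s) := by

  refine ⟨⟨fun T x => ∑ U ∈ Finset.univ.powerset.filter (fun U : Finset (Fin n) => U.Nonempty),
      (if T ⊆ U then (-1 : ℝ) ^ (U.card - T.card) else 0) * ∏ i ∈ U, x i, ?_⟩, ?_, ?_⟩
  · intro v hv x
    symm
    calc ∑ T : Finset (Fin n), v T *
          ∑ U ∈ Finset.univ.powerset.filter (fun U : Finset (Fin n) => U.Nonempty),
            (if T ⊆ U then (-1 : ℝ) ^ (U.card - T.card) else 0) * ∏ i ∈ U, x i
        = ∑ T : Finset (Fin n),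
            ∑ U ∈ Finset.univ.powerset.filter (fun U : Finset (Fin n) => U.Nonempty),
              v T * ((if T ⊆ U then (-1 : ℝ) ^ (U.card - T.card) else 0) * ∏ i ∈ U, x i) := by
          simp [Finset.mul_sum]
      _ = ∑ U ∈ Finset.univ.powerset.filter (fun U : Finset (Fin n) => U.Nonempty),
            ∑ T : Finset (Fin n),
              v T * ((if T ⊆ U then (-1 : ℝ) ^ (U.card - T.card) else 0) * ∏ i ∈ U, x i) :=
          Finset.sum_comm
      _ = multilinearFamily v x := by
          refine Finset.sum_congr rfl fun U hU => ?_
          have hfil : Finset.univ.filter (fun T : Finset (Fin n) => T ⊆ U) = U.powerset := by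
            ext T; simp
          calc ∑ T : Finset (Fin n),
                v T * ((if T ⊆ U then (-1 : ℝ) ^ (U.card - T.card) else 0) * ∏ i ∈ U, x i)
              = ∑ T : Finset (Fin n),
                  (if T ⊆ U then ((-1 : ℝ) ^ (U.card - T.card) * v T) * ∏ i ∈ U, x i else 0) := by
                refine Finset.sum_congr rfl fun T _ => ?_
                split <;> ring
            _ = ∑ T ∈ U.powerset, ((-1 : ℝ) ^ (U.card - T.card) * v T) * ∏ i ∈ U, x i := by
                rw [← Finset.sum_filter, hfil]
            _ = mobius v U * ∏ i ∈ U, x i := by rw [mobius, Finset.sum_mul]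
  · intro S hS x hx
    obtain ⟨i, hiS, hxi⟩ := hx
    rw [multilinear_unanimity S hS]
    exact Finset.prod_eq_zero hiS hxi
  · haveI : Nonempty (Fin n) := ⟨⟨0, by omega⟩⟩
    refine ⟨Finset.univ, 1, one_pos, 2, fun _ => 0, Finset.univ_nonempty, ?_⟩
    rw [multilinear_unanimity _ Finset.univ_nonempty, multilinear_unanimity _ Finset.univ_nonempty]
    have hn0 : n ≠ 0 := by omega
    simp only [mul_zero, zero_add, one_mul, Finset.prod_const, Finset.card_univ,
      Fintype.card_fin, zero_pow hn0]
    intro h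
    have h4 : (2 : ℝ) ^ 2 ≤ (2 : ℝ) ^ n := pow_le_pow_right₀ one_le_two hn
    rw [h] at h4
    norm_num at h4
end
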